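/- For any language L ⊆ A* and a fresh letter c ∉ A, the suffix extension L' = L{c}(A ∪ {c})* has a natural density, equal to Σ_{w ∈ L} |B|^{−(|w|+1)} where B = A ∪ {c}; moreover L' is REG-measurable with measure equal to this value. -/

import Mathlib

open Filter Topology

/-- Number of words of `L` of length `n`. -/
noncomputable def wordCount {A : Type*} (L : Set (List A)) (n : ℕ) : ℕ :=
  Nat.card {w : List A // w ∈ L ∧ w.length = n}

/-- `L` has natural density `α`. -/
def HasNatDensity {A : Type*} [Fintype A] (L : Set (List A)) (α : ℝ) : Prop :=
  Tendsto (fun n : ℕ => (wordCount L n : ℝ) / (Fintype.card A : ℝ) ^ n) atTop (nhds α)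

/-- `L` has (Cesàro) density `α`. -/
def HasCesaroDensity {A : Type*} [Fintype A] (L : Set (List A)) (α : ℝ) : Prop :=
  Tendsto (fun n : ℕ =>
      (∑ k ∈ Finset.range n, (wordCount L k : ℝ) / (Fintype.card A : ℝ) ^ k) / n)
    atTop (nhds α)

/-- `L` is a regular language (accepted by a DFA with finitely many states). -/
def IsRegularLang {A : Type*} (L : Set (List A)) : Prop :=
  ∃ (σ : Type) (_ : Fintype σ) (M : DFA A σ), ∀ w, w ∈ M.accepts ↔ w ∈ L

/-- The suffix extension of `L ⊆ A*` by a fresh letter `c` (modelled as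
`none : Option A`): `L' = {u c v : u ∈ L, v ∈ B*}` over `B = A ∪ {c}`. -/
def suffixExt {A : Type*} (L : Set (List A)) : Set (List (Option A)) :=
  {w | ∃ u v, u ∈ L ∧ w = u.map some ++ none :: v}

/-!
Splitting a word of `L' = suffixExt L` at its first `c = none` identifies its words of
length `n` with triples `(m, u, v)`, `u ∈ L` of length `m < n`, `v ∈ Bⁿ⁻¹⁻ᵐ`. Hence
`|L' ∩ Bⁿ| / kⁿ` is exactly the sum of the weights `k⁻¹ ^ (|w| + 1)` over the words `w ∈ L` of
length `< n`, and the natural density is the whole series.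

The suffix extension of a regular language is regular (Myhill–Nerode: a left quotient of
`suffixExt L` is `B*`, `∅`, or the suffix extension of a left quotient of `L`). So for finite
`F ⊆ L` the language `suffixExt F` is a regular inner approximation, and for finite `F ⊆ Lᶜ` the
language `(suffixExt F)ᶜ` a regular outer one. Their densities approach the series from both
sides, because the weights of all words of `A*` sum to `1`.
-/

namespace Language

variable {α : Type*}

theorem IsRegular.of_finite {L : Language α} (hL : (L : Set (List α)).Finite) :
    L.IsRegular := by
  set suffixes : Set (List α) := ⋃ w ∈ (L : Set (List α)), {y | y <:+ w}
  have hsuffixes : suffixes.Finite :=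
    hL.biUnion fun w _ => w.tails.finite_toSet.subset fun y hy => (List.mem_tails _ _).2 hy
  refine .of_finite_range_leftQuotient <| hsuffixes.finite_subsets.subset ?_
  rintro _ ⟨x, rfl⟩ y hy
  exact Set.mem_biUnion hy (List.suffix_append x y)

end Language

theorem isRegularLang_iff {A : Type*} (L : Set (List A)) :
    IsRegularLang L ↔ Language.IsRegular (L : Language A) :=
  exists_congr fun _ => exists_congr fun _ => exists_congr fun _ => Set.ext_iff.symm

theorem isRegularLang_of_finite {A : Type*} {L : Set (List A)} (hL : L.Finite) :
    IsRegularLang L :=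
  (isRegularLang_iff L).2 (Language.IsRegular.of_finite hL)

theorem IsRegularLang.compl {A : Type*} {L : Set (List A)} (hL : IsRegularLang L) :
    IsRegularLang Lᶜ :=
  (isRegularLang_iff Lᶜ).2 ((isRegularLang_iff L).1 hL).compl

section SuffixExt

variable {A : Type*}

theorem map_some_append_none_cons_inj {u u' : List A} {v v' : List (Option A)}
    (h : u.map some ++ none :: v = u'.map some ++ none :: v') : u = u' ∧ v = v' := by
  induction u generalizing u' with
  | nil => cases u' <;> simp_all
  | cons a u ih =>
    cases u' with
    | nil => simp at h
    | cons b u' =>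
      simp only [List.map_cons, List.cons_append, List.cons.injEq, Option.some.injEq] at h
      obtain ⟨rfl, h⟩ := h
      simpa using ih h

theorem suffixExt_mono {L L' : Set (List A)} (h : L ⊆ L') : suffixExt L ⊆ suffixExt L' := by
  rintro _ ⟨u, v, hu, rfl⟩
  exact ⟨u, v, h hu, rfl⟩

theorem disjoint_suffixExt {L L' : Set (List A)} (h : Disjoint L L') :
    Disjoint (suffixExt L) (suffixExt L') := by
  refine Set.disjoint_left.2 ?_
  rintro _ ⟨u, v, hu, rfl⟩ ⟨u', v', hu', heq⟩
  obtain ⟨rfl, -⟩ := map_some_append_none_cons_inj heq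
  exact Set.disjoint_left.1 h hu hu'

theorem none_cons_mem_suffixExt {L : Set (List A)} {w : List (Option A)} :
    none :: w ∈ suffixExt L ↔ [] ∈ L := by
  constructor
  · rintro ⟨_ | ⟨a, u⟩, v, hu, h⟩
    · exact hu
    · simp at h
  · exact fun h => ⟨[], w, h, rfl⟩

theorem some_cons_mem_suffixExt {L : Set (List A)} {a : A} {w : List (Option A)} :
    some a :: w ∈ suffixExt L ↔ w ∈ suffixExt (Language.leftQuotient L [a]) := by
  constructor
  · rintro ⟨_ | ⟨b, u⟩, v, hu, h⟩
    · simp at h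
    · simp only [List.map_cons, List.cons_append, List.cons.injEq, Option.some.injEq] at h
      obtain ⟨rfl, rfl⟩ := h
      exact ⟨u, v, hu, rfl⟩
  · rintro ⟨u, v, hu, rfl⟩
    exact ⟨a :: u, v, hu, rfl⟩

theorem leftQuotient_suffixExt_mem (L : Set (List A)) (x : List (Option A)) :
    Language.leftQuotient (suffixExt L) x ∈
      insert Set.univ (insert ∅ (suffixExt '' Set.range (Language.leftQuotient L))) := by
  induction x generalizing L with
  | nil => exact .inr <| .inr ⟨L, ⟨[], rfl⟩, rfl⟩
  | cons b x ih =>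
    cases b with
    | none =>
      by_cases hL : [] ∈ L
      · exact .inl (Set.eq_univ_of_forall fun _ => none_cons_mem_suffixExt.2 hL)
      · exact .inr (.inl (Set.eq_empty_of_forall_notMem fun _ hy =>
          hL (none_cons_mem_suffixExt.1 hy)))
    | some a =>
      have hquot : Language.leftQuotient (suffixExt L) (some a :: x) =
          Language.leftQuotient (suffixExt (Language.leftQuotient L [a])) x := by
        ext y
        exact some_cons_mem_suffixExt
      rw [hquot]
      refine Set.insert_subset_insert (Set.insert_subset_insert (Set.image_mono ?_)) (ih _)
      rintro _ ⟨z, rfl⟩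
      exact ⟨[a] ++ z, Language.leftQuotient_append L [a] z⟩

theorem IsRegularLang.suffixExt {L : Set (List A)} (hL : IsRegularLang L) :
    IsRegularLang (suffixExt L) := by
  rw [isRegularLang_iff] at hL ⊢
  refine .of_finite_range_leftQuotient <| Set.Finite.subset ?_
    (Set.range_subset_iff.2 (leftQuotient_suffixExt_mem L))
  exact ((hL.finite_range_leftQuotient.image _).insert _).insert _

end SuffixExt

section WordCount

variable {A : Type*}

def wordsOfLengthEquiv (K : Set (List A)) (n : ℕ) :
    {w : List A // w ∈ K ∧ w.length = n} ≃ {v : List.Vector A n // v.1 ∈ K} :=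
  (Equiv.subtypeEquivRight fun _ => and_comm).trans
    (Equiv.subtypeSubtypeEquivSubtypeInter (·.length = n) (· ∈ K)).symm

variable [Fintype A]

instance (K : Set (List A)) (n : ℕ) : Finite {w : List A // w ∈ K ∧ w.length = n} :=
  .of_equiv _ (wordsOfLengthEquiv K n).symm

open Classical in
theorem wordCount_eq_card_filter (K : Set (List A)) (n : ℕ) :
    wordCount K n = Finset.card {v : List.Vector A n | v.1 ∈ K} := by
  rw [wordCount, Nat.card_congr (wordsOfLengthEquiv K n), Nat.card_eq_fintype_card,
    Fintype.card_subtype]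

theorem wordCount_univ (n : ℕ) : wordCount (Set.univ : Set (List A)) n = Fintype.card A ^ n := by
  classical
  simp [wordCount_eq_card_filter, card_vector]

theorem wordCount_mono {K K' : Set (List A)} (h : K ⊆ K') (n : ℕ) :
    wordCount K n ≤ wordCount K' n := by
  classical
  simp only [wordCount_eq_card_filter]
  exact Finset.card_le_card (Finset.monotone_filter_right _ fun _ _ hv => h hv)

theorem wordCount_add_wordCount_compl (K : Set (List A)) (n : ℕ) :
    wordCount K n + wordCount Kᶜ n = Fintype.card A ^ n := by
  classical
  simp only [wordCount_eq_card_filter, Set.mem_compl_iff]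
  rw [Finset.card_filter_add_card_filter_not, Finset.card_univ, card_vector]

theorem wordCount_le (K : Set (List A)) (n : ℕ) : wordCount K n ≤ Fintype.card A ^ n :=
  wordCount_univ (A := A) n ▸ wordCount_mono (Set.subset_univ K) n

end WordCount

section Density

variable {A : Type*} [Fintype A]

theorem HasNatDensity.compl [Nonempty A] {K : Set (List A)} {α : ℝ} (h : HasNatDensity K α) :
    HasNatDensity Kᶜ (1 - α) := by
  refine (tendsto_const_nhds.sub h).congr fun n => ?_
  have hcount : (wordCount K n : ℝ) + wordCount Kᶜ n = (Fintype.card A : ℝ) ^ n := by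
    exact_mod_cast wordCount_add_wordCount_compl K n
  have hpos : (0 : ℝ) < (Fintype.card A : ℝ) ^ n := by positivity
  field_simp
  linarith

theorem HasNatDensity.hasCesaroDensity {K : Set (List A)} {α : ℝ} (h : HasNatDensity K α) :
    HasCesaroDensity K α :=
  h.cesaro.congr fun _ => inv_mul_eq_div _ _

theorem HasCesaroDensity.le_of_subset {K K' : Set (List A)} {β β' : ℝ} (hsub : K ⊆ K')
    (h : HasCesaroDensity K β) (h' : HasCesaroDensity K' β') : β ≤ β' := by
  refine le_of_tendsto_of_tendsto' h h' fun n => ?_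
  gcongr with m
  exact_mod_cast wordCount_mono hsub m

end Density

section Counting

variable {A : Type*} [Fintype A]

theorem wordCount_suffixExt (L : Set (List A)) (n : ℕ) :
    wordCount (suffixExt L) n =
      ∑ m ∈ Finset.range n, wordCount L m * Fintype.card (Option A) ^ (n - 1 - m) := by
  let join (x : Σ m : Fin n, {u // u ∈ L ∧ u.length = m} × List.Vector (Option A) (n - 1 - m)) :
      {w // w ∈ suffixExt L ∧ w.length = n} :=
    ⟨x.2.1.1.map some ++ none :: x.2.2.1, ⟨_, _, x.2.1.2.1, rfl⟩, by
      simp only [List.length_append, List.length_map, List.length_cons, x.2.1.2.2, x.2.2.2]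
      omega⟩
  have hjoin : Function.Bijective join := by
    constructor
    · rintro ⟨m, ⟨u, hu, hum⟩, v⟩ ⟨m', ⟨u', hu', hum'⟩, v'⟩ h
      obtain ⟨rfl, hv⟩ := map_some_append_none_cons_inj (congrArg Subtype.val h)
      obtain rfl : m = m' := Fin.ext (hum.symm.trans hum')
      rw [List.Vector.eq v v' hv]
    · rintro ⟨_, ⟨u, v, hu, rfl⟩, hlen⟩
      simp only [List.length_append, List.length_map, List.length_cons] at hlen
      exact ⟨⟨⟨u.length, by omega⟩, ⟨u, hu, rfl⟩, ⟨v, by simp; omega⟩⟩, rfl⟩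
  rw [wordCount, ← Nat.card_congr (Equiv.ofBijective join hjoin), Nat.card_sigma,
    ← Fin.sum_univ_eq_sum_range (fun m => wordCount L m * _)]
  simp only [Nat.card_prod, Nat.card_eq_fintype_card (α := List.Vector _ _), card_vector]
  rfl

end Counting

theorem hasSum_pow_mul_inv_add_one_pow {a : ℝ} (ha : 0 ≤ a) :
    HasSum (fun m : ℕ => a ^ m * (a + 1)⁻¹ ^ (m + 1)) 1 := by
  have hr : a * (a + 1)⁻¹ < 1 := by rw [mul_inv_lt_iff₀ (by positivity)]; linarith
  have hgap : 1 - a * (a + 1)⁻¹ = (a + 1)⁻¹ := by field_simp; ring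
  have hgeom := (hasSum_geometric_of_lt_one (by positivity) hr).mul_left (a + 1)⁻¹
  rw [hgap, inv_inv, inv_mul_cancel₀ (by positivity)] at hgeom
  have hterm : (fun m : ℕ => a ^ m * (a + 1)⁻¹ ^ (m + 1)) =
      fun m => (a + 1)⁻¹ * (a * (a + 1)⁻¹) ^ m := funext fun m => by ring
  exact hterm ▸ hgeom

section Weight

variable {A : Type*} [Fintype A]

noncomputable def suffixWeight (w : List A) : ℝ :=
  (Fintype.card (Option A) : ℝ)⁻¹ ^ (w.length + 1)

theorem cast_card_option : (Fintype.card (Option A) : ℝ) = Fintype.card A + 1 := by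
  rw [Fintype.card_option, Nat.cast_succ]

theorem suffixWeight_nonneg (w : List A) : 0 ≤ suffixWeight w := by
  unfold suffixWeight
  positivity

theorem summable_wordCount_mul_inv_pow (L : Set (List A)) :
    Summable fun m : ℕ =>
      (wordCount L m : ℝ) * (Fintype.card (Option A) : ℝ)⁻¹ ^ (m + 1) := by
  refine (hasSum_pow_mul_inv_add_one_pow (Nat.cast_nonneg (Fintype.card A))).summable
    |>.of_nonneg_of_le (fun _ => by positivity) fun m => ?_
  rw [cast_card_option]
  gcongr
  exact_mod_cast wordCount_le L m

theorem hasSum_suffixWeight (L : Set (List A)) :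
    HasSum (fun w : L => suffixWeight (w : List A))
      (∑' m : ℕ, (wordCount L m : ℝ) * (Fintype.card (Option A) : ℝ)⁻¹ ^ (m + 1)) := by
  let byLength := Equiv.sigmaFiberEquiv fun w : L => (w : List A).length
  let fiberEquiv (m : ℕ) := Equiv.subtypeSubtypeEquivSubtypeInter (· ∈ L) (·.length = m)
  have hfiber (m : ℕ) : ∑' w : {w : L // (w : List A).length = m}, suffixWeight (w : List A) =
      (wordCount L m : ℝ) * (Fintype.card (Option A) : ℝ)⁻¹ ^ (m + 1) := by
    rw [tsum_congr fun w => by rw [suffixWeight, w.2], tsum_const, nsmul_eq_mul,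
      Nat.card_congr (fiberEquiv m)]
    rfl
  have hsigma : Summable fun x => suffixWeight (byLength x : List A) :=
    (summable_sigma_of_nonneg fun _ => suffixWeight_nonneg _).2
      ⟨fun m => have := Finite.of_equiv _ (fiberEquiv m).symm; .of_finite,
        (summable_wordCount_mul_inv_pow L).congr fun m => (hfiber m).symm⟩
  have hsum : Summable fun w : L => suffixWeight (w : List A) := byLength.summable_iff.1 hsigma
  rw [← tsum_congr hfiber]
  have hregroup := (byLength.tsum_eq fun w => suffixWeight (w : List A)).symm.trans
    hsigma.tsum_sigma
  exact hregroup ▸ hsum.hasSum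

theorem hasSum_suffixWeight_univ : HasSum (suffixWeight (A := A)) 1 := by
  have h := hasSum_suffixWeight (Set.univ : Set (List A))
  simp only [wordCount_univ, Nat.cast_pow, cast_card_option,
    (hasSum_pow_mul_inv_add_one_pow (Nat.cast_nonneg (Fintype.card A))).tsum_eq] at h
  exact (Equiv.Set.univ (List A)).hasSum_iff.1 h

end Weight

theorem isLUB_sum_finset_subset {ι : Type*} {f : ι → ℝ} (hf : ∀ i, 0 ≤ f i) {s : Set ι} {a : ℝ}
    (hs : HasSum (fun i : s => f i) a) :
    IsLUB {x | ∃ F : Finset ι, ↑F ⊆ s ∧ ∑ i ∈ F, f i = x} a := by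
  classical
  have hrange : {x | ∃ F : Finset ι, ↑F ⊆ s ∧ ∑ i ∈ F, f i = x} =
      Set.range fun t : Finset s => ∑ i ∈ t, f i := by
    ext x
    constructor
    · rintro ⟨F, hF, rfl⟩
      exact ⟨F.subtype (· ∈ s), Finset.sum_subtype_of_mem f fun i hi => hF hi⟩
    · rintro ⟨t, rfl⟩
      refine ⟨t.map (.subtype _), fun i hi => ?_, Finset.sum_map _ _ _⟩
      obtain ⟨j, -, rfl⟩ := Finset.mem_map.1 hi
      exact j.2
  rw [hrange]
  exact isLUB_hasSum (fun i => hf i) hs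

section SuffixExtDensity

variable {A : Type*} [Fintype A]

theorem hasNatDensity_suffixExt (L : Set (List A)) :
    HasNatDensity (suffixExt L) (∑' w : L, suffixWeight (w : List A)) := by
  rw [(hasSum_suffixWeight L).tsum_eq]
  refine (summable_wordCount_mul_inv_pow L).hasSum.tendsto_sum_nat.congr fun n => ?_
  rw [wordCount_suffixExt, Nat.cast_sum, Finset.sum_div]
  refine Finset.sum_congr rfl fun m hm => ?_
  push_cast
  set k : ℝ := (Fintype.card (Option A) : ℝ)
  have hk : k ≠ 0 := by positivity
  have hsplit : k ^ n = k ^ (n - 1 - m) * k ^ (m + 1) := by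
    rw [← pow_add]
    congr 1
    have := Finset.mem_range.1 hm
    omega
  rw [hsplit, inv_pow]
  field_simp

theorem hasNatDensity_suffixExt_finset (F : Finset (List A)) :
    HasNatDensity (suffixExt (F : Set (List A))) (∑ w ∈ F, suffixWeight w) :=
  Finset.tsum_subtype' F suffixWeight ▸ hasNatDensity_suffixExt (F : Set (List A))

end SuffixExtDensity

/-- The suffix extension of any language has a natural density, equal to
`Σ_{w ∈ L} |B|^{-(|w|+1)}`, and is `REG`-measurable with this measure. -/
theorem stmt15 {A : Type*} [Fintype A] (L : Set (List A)) :
    HasNatDensity (suffixExt L)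
      (∑' w : L, ((Fintype.card (Option A) : ℝ))⁻¹ ^ ((w : List A).length + 1)) ∧
    IsLUB {α : ℝ | ∃ K : Set (List (Option A)), IsRegularLang K ∧ K ⊆ suffixExt L ∧
        HasCesaroDensity K α}
      (∑' w : L, ((Fintype.card (Option A) : ℝ))⁻¹ ^ ((w : List A).length + 1)) ∧
    IsGLB {β : ℝ | ∃ M : Set (List (Option A)), IsRegularLang M ∧ suffixExt L ⊆ M ∧
        HasCesaroDensity M β}
      (∑' w : L, ((Fintype.card (Option A) : ℝ))⁻¹ ^ ((w : List A).length + 1)) := by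
  have hL := (hasSum_suffixWeight L).summable.hasSum
  have hLc := (hasSum_suffixWeight Lᶜ).summable.hasSum
  have hnat := hasNatDensity_suffixExt L
  have hces := hnat.hasCesaroDensity
  have htotal := (HasSum.add_compl (f := suffixWeight) hL hLc).unique hasSum_suffixWeight_univ
  refine ⟨hnat, ?_, fun β ⟨M, _, hM, hβ⟩ => hces.le_of_subset hM hβ, fun b hb => ?_⟩
  · refine (isLUB_sum_finset_subset suffixWeight_nonneg hL).of_subset_of_superset isLUB_Iic
      ?_ fun α ⟨K, _, hK, hα⟩ => hα.le_of_subset hK hces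
    rintro _ ⟨F, hF, rfl⟩
    exact ⟨_, (isRegularLang_of_finite F.finite_toSet).suffixExt, suffixExt_mono hF,
      (hasNatDensity_suffixExt_finset F).hasCesaroDensity⟩
  · change b ≤ ∑' w : L, suffixWeight (w : List A)
    suffices ∑' w : ↥Lᶜ, suffixWeight (w : List A) ≤ 1 - b by linarith
    refine (isLUB_sum_finset_subset suffixWeight_nonneg hLc).2 ?_
    rintro _ ⟨F, hF, rfl⟩
    have hdisj := disjoint_suffixExt (Set.subset_compl_iff_disjoint_left.1 hF)
    have := hb ⟨_, (isRegularLang_of_finite F.finite_toSet).suffixExt.compl,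
      hdisj.subset_compl_right, (hasNatDensity_suffixExt_finset F).compl.hasCesaroDensity⟩
    linarith
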